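/- arXiv:1006.0491 — 2 statements merged into one kernel-verified Lean document; each statement's English description precedes it below -/
import Mathlib

section
/- Let H be a Hilbert space and (u_n) a bounded sequence in H. If the averages (1/N)·Σ_{n=1}^N u_n do not converge to 0 in norm as N→∞, then the scalar averages (1/M)·Σ_{m=1}^M (1/N)·Σ_{n=1}^N ⟨u_n, u_{n+m}⟩ do not converge to 0 as N→∞ and then M→∞ (i.e., it is not the case that for every ε>0 there exists M₀ such that for all M≥M₀, limsup_{N→∞} |(1/M)Σ_{m=1}^M (1/N)Σ_{n=1}^N ⟨u_n,u_{n+m}⟩| < ε). -/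
/-!
Replacing each `u k` by the moving average `B k = (1/M) ∑_{m ≤ M} u (k + m)` changes the Cesàro
mean `A_N` by `O(M/N)`. By Jensen, `‖(1/N) ∑ B k‖² ≤ (1/N) ∑ ‖B k‖²`, and expanding the squared
norms gives correlations `⟪u (k + m), u (k + m')⟫` which, up to `O(M/N)`, depend only on
`d = m' - m`. Summing the upper triangle row by row yields partial sums `∑_{d ≤ L} γ_N(d)` of the
autocorrelations; these are `L` times the iterated averages of the statement, hence at most `L δ`
when `M₀ ≤ L` and at most `M₀ C²` otherwise. So `limsup_N ‖A_N‖² ≤ (1 + 2 M₀) C² / M + 2 δ`,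
which is small for large `M` and small `δ`.
-/

open Filter Finset
open scoped RealInnerProductSpace Topology

noncomputable def cesaroAvg {E : Type*} [AddCommGroup E] [Module ℝ E] (N : ℕ) (f : ℕ → E) : E :=
  (N : ℝ)⁻¹ • ∑ n ∈ Icc 1 N, f n

noncomputable def movingAvg {E : Type*} [AddCommGroup E] [Module ℝ E] (u : ℕ → E) (M k : ℕ) : E :=
  cesaroAvg M fun m => u (k + m)

section Module

variable {E : Type*} [AddCommGroup E] [Module ℝ E]

lemma cesaroAvg_sub (N : ℕ) (f g : ℕ → E) :
    cesaroAvg N (fun n => f n - g n) = cesaroAvg N f - cesaroAvg N g := by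
  simp only [cesaroAvg, sum_sub_distrib, smul_sub]

lemma cesaroAvg_const {N : ℕ} (hN : N ≠ 0) (x : E) : cesaroAvg N (fun _ => x) = x := by
  rw [cesaroAvg, sum_const, Nat.card_Icc, add_tsub_cancel_right, ← Nat.cast_smul_eq_nsmul ℝ,
    smul_smul, inv_mul_cancel₀ (Nat.cast_ne_zero.2 hN), one_smul]

lemma cesaroAvg_comm (N M : ℕ) (f : ℕ → ℕ → E) :
    cesaroAvg N (fun k => cesaroAvg M (f k)) = cesaroAvg M (fun m => cesaroAvg N (f · m)) := by
  simp only [cesaroAvg, ← smul_sum, smul_smul, mul_comm]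
  rw [sum_comm]

lemma sum_Icc_eq_smul_cesaroAvg (N : ℕ) (f : ℕ → E) :
    ∑ n ∈ Icc 1 N, f n = (N : ℝ) • cesaroAvg N f := by
  rcases eq_or_ne N 0 with rfl | hN
  · simp
  · simp [cesaroAvg, smul_smul, hN]

end Module

lemma norm_sum_Icc_add_sub_le {E : Type*} [SeminormedAddCommGroup E] {f : ℕ → E} {K : ℝ}
    (hf : ∀ n, ‖f n‖ ≤ K) (N m : ℕ) :
    ‖∑ n ∈ Icc 1 N, f (n + m) - ∑ n ∈ Icc 1 N, f n‖ ≤ 2 * m * K := by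
  induction m with
  | zero => simp
  | succ m ih =>
    have hstep : ‖∑ n ∈ Icc 1 N, f (n + (m + 1)) - ∑ n ∈ Icc 1 N, f (n + m)‖ ≤ 2 * K := by
      rcases N.eq_zero_or_pos with rfl | hN
      · simpa using (norm_nonneg _).trans (hf 0)
      have htelescope := sum_Icc_sub hN (fun n => f (n + m))
      simp only [add_right_comm _ 1 m] at htelescope
      simp only [← sum_sub_distrib, ← add_assoc, htelescope]
      exact (norm_sub_le _ _).trans (by linarith [hf (N + m + 1), hf (0 + m + 1)])
    calc _ ≤ ‖∑ n ∈ Icc 1 N, f (n + (m + 1)) - ∑ n ∈ Icc 1 N, f (n + m)‖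
          + ‖∑ n ∈ Icc 1 N, f (n + m) - ∑ n ∈ Icc 1 N, f n‖ :=
          norm_sub_le_norm_sub_add_norm_sub _ _ _
      _ ≤ 2 * K + 2 * m * K := add_le_add hstep ih
      _ = 2 * ↑(m + 1) * K := by push_cast; ring

section Normed

variable {E : Type*} [SeminormedAddCommGroup E] [NormedSpace ℝ E]

lemma norm_cesaroAvg_le {N : ℕ} {f : ℕ → E} {K : ℝ} (hK : 0 ≤ K)
    (hf : ∀ n ∈ Icc 1 N, ‖f n‖ ≤ K) : ‖cesaroAvg N f‖ ≤ K := by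
  rcases eq_or_ne N 0 with rfl | hN
  · simpa [cesaroAvg] using hK
  calc ‖cesaroAvg N f‖ ≤ (N : ℝ)⁻¹ * ∑ n ∈ Icc 1 N, K := by
        rw [cesaroAvg, norm_smul, norm_inv, RCLike.norm_natCast]
        gcongr
        exact norm_sum_le_of_le _ hf
    _ = K := by simp [hN]

lemma norm_cesaroAvg_add_sub_le {f : ℕ → E} {K : ℝ} (hf : ∀ n, ‖f n‖ ≤ K) (N m : ℕ) :
    ‖cesaroAvg N (fun n => f (n + m)) - cesaroAvg N f‖ ≤ 2 * m * K / N := by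
  rw [cesaroAvg, cesaroAvg, ← smul_sub, norm_smul, norm_inv, RCLike.norm_natCast, inv_mul_eq_div]
  gcongr
  exact norm_sum_Icc_add_sub_le hf N m

lemma norm_cesaroAvg_sq_le (N : ℕ) (f : ℕ → E) :
    ‖cesaroAvg N f‖ ^ 2 ≤ cesaroAvg N (fun n => ‖f n‖ ^ 2) := by
  have hjensen := sum_div_card_sq_le_sum_sq_div_card (s := Icc 1 N) (f := fun n => ‖f n‖)
  simp only [Nat.card_Icc, add_tsub_cancel_right] at hjensen
  calc ‖cesaroAvg N f‖ ^ 2 ≤ ((∑ n ∈ Icc 1 N, ‖f n‖) / N) ^ 2 := by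
        rw [cesaroAvg, norm_smul, norm_inv, RCLike.norm_natCast, inv_mul_eq_div]
        gcongr
        exact norm_sum_le _ _
    _ ≤ _ := by simpa [cesaroAvg, inv_mul_eq_div] using hjensen

lemma norm_cesaroAvg_sub_cesaroAvg_movingAvg_le {u : ℕ → E} {C : ℝ} (hC : ∀ n, ‖u n‖ ≤ C)
    {M : ℕ} (hM : M ≠ 0) (N : ℕ) :
    ‖cesaroAvg N u - cesaroAvg N (movingAvg u M)‖ ≤ 2 * M * C / N := by
  have hC0 : 0 ≤ C := (norm_nonneg _).trans (hC 0)
  unfold movingAvg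
  rw [cesaroAvg_comm, ← cesaroAvg_const hM (cesaroAvg N u), ← cesaroAvg_sub]
  refine norm_cesaroAvg_le (by positivity) fun m hm => ?_
  rw [norm_sub_rev]
  refine (norm_cesaroAvg_add_sub_le hC N m).trans ?_
  gcongr
  exact_mod_cast (mem_Icc.1 hm).2

end Normed

lemma sum_sum_eq_sum_diag_add_two_mul {ι R : Type*} [LinearOrder ι] [NonAssocSemiring R]
    (s : Finset ι) (r : ι → ι → R) (hr : ∀ i j, r i j = r j i) :
    ∑ i ∈ s, ∑ j ∈ s, r i j = ∑ i ∈ s, r i i + 2 * ∑ i ∈ s, ∑ j ∈ s with i < j, r i j := by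
  have htrichotomy : ∀ i j, r i j = (if i = j then r i j else 0)
      + (if i < j then r i j else 0) + (if j < i then r i j else 0) := by
    intro i j
    rcases lt_trichotomy i j with hij | rfl | hij
    · simp [hij, hij.ne, hij.not_gt]
    · simp
    · simp [hij, hij.ne', hij.not_gt]
  have hlower : ∑ i ∈ s, ∑ j ∈ s, (if j < i then r i j else 0)
      = ∑ i ∈ s, ∑ j ∈ s, (if i < j then r i j else 0) := by
    rw [sum_comm]
    simp_rw [hr]
  simp_rw [sum_filter]
  conv_lhs => enter [2, i, 2, j]; rw [htrichotomy i j]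
  simp only [sum_add_distrib, hlower, sum_ite_eq]
  rw [sum_congr rfl fun i hi => if_pos hi, two_mul, add_assoc]

section InnerProduct

variable {E : Type*} [NormedAddCommGroup E] [InnerProductSpace ℝ E]

noncomputable def correlation (u : ℕ → E) (N m m' : ℕ) : ℝ :=
  cesaroAvg N fun k => ⟪u (k + m), u (k + m')⟫

noncomputable def autocorrelation (u : ℕ → E) (N d : ℕ) : ℝ :=
  cesaroAvg N fun n => ⟪u n, u (n + d)⟫

lemma correlation_comm (u : ℕ → E) (N m m' : ℕ) : correlation u N m m' = correlation u N m' m := by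
  simp only [correlation, real_inner_comm]

lemma cesaroAvg_norm_movingAvg_sq (u : ℕ → E) (N M : ℕ) :
    cesaroAvg N (fun k => ‖movingAvg u M k‖ ^ 2)
      = (M : ℝ)⁻¹ ^ 2 * ∑ m ∈ Icc 1 M, ∑ m' ∈ Icc 1 M, correlation u N m m' := by
  simp only [← real_inner_self_eq_norm_sq, movingAvg, correlation, cesaroAvg, real_inner_smul_left,
    real_inner_smul_right, sum_inner, inner_sum, smul_eq_mul, mul_sum]
  rw [sum_comm]
  refine sum_congr rfl fun m' _ => ?_
  rw [sum_comm]
  exact sum_congr rfl fun m _ => sum_congr rfl fun k _ => by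
    rw [real_inner_comm]; ring

variable {u : ℕ → E} {C : ℝ}

lemma abs_inner_le_sq_of_norm_le (hC : ∀ n, ‖u n‖ ≤ C) (i j : ℕ) : |⟪u i, u j⟫| ≤ C ^ 2 :=
  (abs_real_inner_le_norm _ _).trans <| by
    rw [sq]; exact mul_le_mul (hC i) (hC j) (norm_nonneg _) ((norm_nonneg _).trans (hC i))

lemma abs_correlation_le (hC : ∀ n, ‖u n‖ ≤ C) (N m m' : ℕ) : |correlation u N m m'| ≤ C ^ 2 := by
  rw [← Real.norm_eq_abs]
  exact norm_cesaroAvg_le (sq_nonneg C) fun k _ => abs_inner_le_sq_of_norm_le hC _ _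

lemma abs_autocorrelation_le (hC : ∀ n, ‖u n‖ ≤ C) (N d : ℕ) : |autocorrelation u N d| ≤ C ^ 2 := by
  rw [← Real.norm_eq_abs]
  exact norm_cesaroAvg_le (sq_nonneg C) fun n _ => abs_inner_le_sq_of_norm_le hC n (n + d)

lemma abs_cesaroAvg_autocorrelation_le (hC : ∀ n, ‖u n‖ ≤ C) (L N : ℕ) :
    |cesaroAvg L (autocorrelation u N)| ≤ C ^ 2 := by
  rw [← Real.norm_eq_abs]
  exact norm_cesaroAvg_le (sq_nonneg C) fun d _ => abs_autocorrelation_le hC N d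

lemma abs_correlation_add_sub_autocorrelation_le (hC : ∀ n, ‖u n‖ ≤ C) (N m d : ℕ) :
    |correlation u N m (m + d) - autocorrelation u N d| ≤ 2 * m * C ^ 2 / N := by
  simpa [correlation, autocorrelation, add_assoc, Real.norm_eq_abs] using
    norm_cesaroAvg_add_sub_le (f := fun j => ⟪u j, u (j + d)⟫)
      (abs_inner_le_sq_of_norm_le hC · _) N m

lemma abs_sum_correlation_sub_sum_autocorrelation_le (hC : ∀ n, ‖u n‖ ≤ C) {m M : ℕ}
    (hmM : m ≤ M) (N : ℕ) :
    |∑ m' ∈ Icc (m + 1) M, correlation u N m m' - ∑ d ∈ Icc 1 (M - m), autocorrelation u N d|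
      ≤ (M - m : ℕ) * (2 * m * C ^ 2 / N) := by
  have hreindex : Icc (m + 1) M = (Icc 1 (M - m)).map (addLeftEmbedding m) := by
    rw [map_add_left_Icc, Nat.add_sub_cancel' hmM]
  rw [hreindex, sum_map, ← sum_sub_distrib]
  exact (abs_sum_le_sum_abs _ _).trans <| (sum_le_card_nsmul _ _ _ fun d _ =>
    abs_correlation_add_sub_autocorrelation_le hC N m d).trans (by simp)

lemma norm_cesaroAvg_movingAvg_sq_le (hC : ∀ n, ‖u n‖ ≤ C) {M : ℕ} (hM : M ≠ 0) (N : ℕ) {η : ℝ}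
    (hη : ∀ L < M, |∑ d ∈ Icc 1 L, autocorrelation u N d| ≤ η) :
    ‖cesaroAvg N (movingAvg u M)‖ ^ 2 ≤ (C ^ 2 + 2 * η) / M + 4 * M * C ^ 2 / N := by
  have hrow : ∀ m ∈ Icc 1 M,
      ∑ m' ∈ Icc 1 M with m < m', correlation u N m m' ≤ η + 2 * M ^ 2 * C ^ 2 / N := by
    intro m hm
    obtain ⟨h1m, hmM⟩ := mem_Icc.1 hm
    have hupper : {m' ∈ Icc 1 M | m < m'} = Icc (m + 1) M := by ext; simp; omega
    have hshift := (abs_le.1 (abs_sum_correlation_sub_sum_autocorrelation_le hC hmM N)).2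
    have hsum := (abs_le.1 (hη (M - m) (by omega))).2
    have herror : (M - m : ℕ) * (2 * m * C ^ 2 / N) ≤ 2 * M ^ 2 * C ^ 2 / N :=
      calc _ ≤ (M : ℝ) * (2 * M * C ^ 2 / N) := by gcongr; exact_mod_cast Nat.sub_le M m
        _ = _ := by ring
    rw [hupper]
    exact (sub_le_iff_le_add'.1 hshift).trans (add_le_add hsum herror)
  calc _ ≤ cesaroAvg N (fun k => ‖movingAvg u M k‖ ^ 2) := norm_cesaroAvg_sq_le _ _
    _ = (M : ℝ)⁻¹ ^ 2 * (∑ m ∈ Icc 1 M, correlation u N m m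
          + 2 * ∑ m ∈ Icc 1 M, ∑ m' ∈ Icc 1 M with m < m', correlation u N m m') := by
        rw [cesaroAvg_norm_movingAvg_sq,
          sum_sum_eq_sum_diag_add_two_mul _ _ (correlation_comm u N)]
    _ ≤ (M : ℝ)⁻¹ ^ 2 * (M * C ^ 2 + 2 * (M * (η + 2 * M ^ 2 * C ^ 2 / N))) := by
        gcongr
        · exact (sum_le_card_nsmul _ _ _ fun m _ =>
            (le_abs_self _).trans (abs_correlation_le hC N m m)).trans (by simp)
        · exact (sum_le_card_nsmul _ _ _ hrow).trans (by simp [mul_add])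
    _ = _ := by field_simp; ring

theorem norm_cesaroAvg_le_of_abs_sum_autocorrelation_le (hC : ∀ n, ‖u n‖ ≤ C) {M : ℕ}
    (hM : M ≠ 0) (N : ℕ) {η : ℝ} (hη : ∀ L < M, |∑ d ∈ Icc 1 L, autocorrelation u N d| ≤ η) :
    ‖cesaroAvg N u‖ ≤ 2 * M * C / N + √((C ^ 2 + 2 * η) / M + 4 * M * C ^ 2 / N) :=
  calc ‖cesaroAvg N u‖
      ≤ ‖cesaroAvg N u - cesaroAvg N (movingAvg u M)‖ + ‖cesaroAvg N (movingAvg u M)‖ :=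
        norm_le_norm_sub_add _ _
    _ ≤ _ := add_le_add (norm_cesaroAvg_sub_cesaroAvg_movingAvg_le hC hM N)
        (Real.le_sqrt_of_sq_le (norm_cesaroAvg_movingAvg_sq_le hC hM N hη))

lemma abs_sum_autocorrelation_le (hC : ∀ n, ‖u n‖ ≤ C) {M₀ M N : ℕ} {ε : ℝ} (hε : 0 ≤ ε)
    (hsmall : ∀ L ∈ Icc M₀ M, |cesaroAvg L (autocorrelation u N)| ≤ ε) {L : ℕ} (hL : L ≤ M) :
    |∑ d ∈ Icc 1 L, autocorrelation u N d| ≤ M * ε + M₀ * C ^ 2 := by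
  rcases le_or_gt M₀ L with hM₀L | hLM₀
  · rw [sum_Icc_eq_smul_cesaroAvg, smul_eq_mul, abs_mul, Nat.abs_cast]
    calc _ ≤ (M : ℝ) * ε := mul_le_mul (by exact_mod_cast hL) (hsmall L (mem_Icc.2 ⟨hM₀L, hL⟩))
          (abs_nonneg _) (Nat.cast_nonneg _)
      _ ≤ _ := le_add_of_nonneg_right (by positivity)
  · calc _ ≤ ∑ d ∈ Icc 1 L, C ^ 2 :=
          (abs_sum_le_sum_abs _ _).trans (sum_le_sum fun d _ => abs_autocorrelation_le hC N d)
      _ = L * C ^ 2 := by simp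
      _ ≤ M₀ * C ^ 2 := by gcongr
      _ ≤ _ := le_add_of_nonneg_left (by positivity)

end InnerProduct

theorem vanDerCorput_estimate_general {H : Type*} [NormedAddCommGroup H]
    [InnerProductSpace ℝ H]
    (u : ℕ → H) (hbdd : ∃ C : ℝ, ∀ n, ‖u n‖ ≤ C)
    (h : ¬ Tendsto (fun N : ℕ => (N : ℝ)⁻¹ • ∑ n ∈ Finset.Icc 1 N, u n) atTop (nhds 0)) :
    ¬ (∀ ε : ℝ, 0 < ε → ∃ M₀ : ℕ, ∀ M ≥ M₀,
        Filter.limsup (fun N : ℕ =>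
          |(M : ℝ)⁻¹ * ∑ m ∈ Finset.Icc 1 M,
            (N : ℝ)⁻¹ * ∑ n ∈ Finset.Icc 1 N, ⟪u n, u (n + m)⟫|) atTop < ε) := by
  obtain ⟨C, hC⟩ := hbdd
  intro hsmall
  refine h (NormedAddGroup.tendsto_nhds_zero.2 fun ε hε => ?_)
  obtain ⟨M₀, hM₀⟩ := hsmall (ε ^ 2 / 4) (by positivity)
  obtain ⟨M, hM, hM0⟩ : ∃ M : ℕ, (1 + 2 * M₀) * C ^ 2 / M < ε ^ 2 / 2 ∧ M ≠ 0 :=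
    (((tendsto_const_div_atTop_nhds_zero_nat _).eventually_lt_const (by positivity)).and
      (eventually_ne_atTop 0)).exists
  have hcorr : ∀ᶠ N in atTop, ∀ L ∈ Icc M₀ M, |cesaroAvg L (autocorrelation u N)| ≤ ε ^ 2 / 4 :=
    (eventually_all_finset _).2 fun L hL =>
      (eventually_lt_of_limsup_lt (hM₀ L (mem_Icc.1 hL).1)
        (isBoundedUnder_of ⟨C ^ 2, abs_cesaroAvg_autocorrelation_le hC L⟩)).mono fun _ => le_of_lt
  set η := M * (ε ^ 2 / 4) + M₀ * C ^ 2
  have hlim : Tendsto (fun N : ℕ => 2 * M * C / N + √((C ^ 2 + 2 * η) / M + 4 * M * C ^ 2 / N))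
      atTop (𝓝 (0 + √((C ^ 2 + 2 * η) / M + 0))) :=
    (tendsto_const_div_atTop_nhds_zero_nat _).add
      (tendsto_const_nhds.add (tendsto_const_div_atTop_nhds_zero_nat _)).sqrt
  have hlt : 0 + √((C ^ 2 + 2 * η) / M + 0) < ε := by
    have hsplit : (C ^ 2 + 2 * η) / M = (1 + 2 * M₀) * C ^ 2 / M + ε ^ 2 / 2 := by
      field_simp; ring
    rw [zero_add, add_zero, Real.sqrt_lt' hε]
    linarith
  filter_upwards [hcorr, hlim.eventually_lt_const hlt] with N hN hNε
  exact (norm_cesaroAvg_le_of_abs_sum_autocorrelation_le hC hM0 N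
    fun L hL => abs_sum_autocorrelation_le hC (by positivity) hN hL.le).trans_lt hNε

/-- **Van der Corput estimate.** If the averages of a bounded sequence in a Hilbert
space do not converge to `0` in norm, then the iterated scalar averages of inner
products do not converge to `0` as `N → ∞` and then `M → ∞`. -/
theorem vanDerCorput_estimate {H : Type*} [NormedAddCommGroup H]
    [InnerProductSpace ℝ H] [CompleteSpace H]
    (u : ℕ → H) (hbdd : ∃ C : ℝ, ∀ n, ‖u n‖ ≤ C)
    (h : ¬ Tendsto (fun N : ℕ => (N : ℝ)⁻¹ • ∑ n ∈ Finset.Icc 1 N, u n) atTop (nhds 0)) :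
    ¬ (∀ ε : ℝ, 0 < ε → ∃ M₀ : ℕ, ∀ M ≥ M₀,
        Filter.limsup (fun N : ℕ =>
          |(M : ℝ)⁻¹ * ∑ m ∈ Finset.Icc 1 M,
            (N : ℝ)⁻¹ * ∑ n ∈ Finset.Icc 1 N, ⟪u n, u (n + m)⟫|) atTop < ε) :=
  vanDerCorput_estimate_general u hbdd h
end

section
/- Suppose the infinitary Density Hales-Jewett theorem holds: for every δ > 0, every Borel probability measure μ on {0,1}^{[k]^*} satisfying μ{x : x_w = 1} ≥ δ for all words w ∈ [k]^* gives positive measure to {x : x_{φ(i)} = 1 for all i ∈ [k]} for some combinatorial line φ : [k] ↪ [k]^*. Then the finitary Density Hales-Jewett theorem holds: for every δ > 0 and k ≥ 1 there is N₀ such that for all N ≥ N₀, every A ⊆ [k]^N with |A| ≥ δk^N contains a combinatorial line. -/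
open MeasureTheory

/-- The type of finite words of positive length over the alphabet `[k]`,
modelling `[k]^* = ⋃_{N ≥ 1} [k]^N`. -/
def DHJWord (k : ℕ) : Type := Σ n : ℕ, (Fin (n + 1) → Fin k)

/-- The word of the combinatorial line determined by a template
`t : Fin (n+1) → Option (Fin k)` (with `none` marking the wildcard set) at
letter `i ∈ [k]`. -/
def DHJLineWord (k n : ℕ) (t : Fin (n + 1) → Option (Fin k)) (i : Fin k) :
    DHJWord k := ⟨n, fun m => (t m).getD i⟩

/-! Suppose line-free sets of density `≥ δ` exist in arbitrarily high dimension. Slices of a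
line-free set are line-free, so the maximal density `δ_N` of a line-free subset of `[k]^N` is
nonincreasing and tends to some `δ₀ ≥ δ > 0`. Take `L` with `δ_L < δ₀ + ε` and a maximal line-free
`A ⊆ [k]^(m+L)`: its slices `A_w`, `w ∈ [k]^m`, average at least `δ₀` and none exceeds `δ_L`, so for
small `ε` every slice has density `> δ₀/2`. Doing this for every prefix length `m = n + 1` gives
line-free sets `A_n`. Now draw independent uniform suffixes `ω_n ∈ [k]^(L_n)` and set `x_w = 1` iff
`w ω_|w| ∈ A_|w|`: every marginal is `≥ δ₀/2`, while a line `φ` with `x_φ ≡ 1` would extend by the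
common suffix to a line in some `A_n`, contradicting the infinitary statement. -/

open Finset Filter
open scoped ENNReal

lemma sum_le_apply_add_card_sub_one_mul {ι : Type*} [Fintype ι] [DecidableEq ι] {f : ι → ℝ}
    {b : ℝ} (hf : ∀ j, f j ≤ b) (i : ι) : ∑ j, f j ≤ f i + (Fintype.card ι - 1) * b := by
  rw [← add_sum_erase _ _ (mem_univ i)]
  gcongr
  calc ∑ j ∈ univ.erase i, f j ≤ (univ.erase i).card • b :=
        sum_le_card_nsmul _ _ _ fun j _ => hf j
    _ = (Fintype.card ι - 1) * b := by
      rw [nsmul_eq_mul, card_erase_of_mem (mem_univ i), card_univ,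
        Nat.cast_sub (Fintype.card_pos_iff.2 ⟨i⟩)]
      simp

namespace DHJ

section Lines

variable {α : Type*}

def lineWord {ι : Type*} (t : ι → Option α) (i : α) : ι → α := fun m => (t m).getD i

def HasLine {N : ℕ} (A : Finset (Fin N → α)) : Prop :=
  ∃ t : Fin N → Option α, (∃ m, t m = none) ∧ ∀ i, lineWord t i ∈ A

lemma not_hasLine_empty [Nonempty α] {N : ℕ} : ¬HasLine (∅ : Finset (Fin N → α)) :=
  fun ⟨_, _, ht⟩ => notMem_empty _ (ht (Classical.arbitrary α))

lemma lineWord_append {m L : ℕ} (t₁ : Fin m → Option α) (t₂ : Fin L → Option α) (i : α) :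
    lineWord (Fin.append t₁ t₂) i = Fin.append (lineWord t₁ i) (lineWord t₂ i) := by
  ext j
  induction j using Fin.addCases <;> simp [lineWord]

lemma hasLine_of_append {m L : ℕ} {A : Finset (Fin (m + L) → α)} {t₁ : Fin m → Option α}
    {t₂ : Fin L → Option α} (hwild : (∃ j, t₁ j = none) ∨ ∃ j, t₂ j = none)
    (hA : ∀ i, Fin.append (lineWord t₁ i) (lineWord t₂ i) ∈ A) : HasLine A := by
  refine ⟨Fin.append t₁ t₂, ?_, fun i => by rw [lineWord_append]; exact hA i⟩
  rcases hwild with ⟨j, hj⟩ | ⟨j, hj⟩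
  · exact ⟨Fin.castAdd L j, by simp [hj]⟩
  · exact ⟨Fin.natAdd m j, by simp [hj]⟩

end Lines

section Slices

variable {α : Type*} [Fintype α] [DecidableEq α] {m L : ℕ}

def slice (A : Finset (Fin (m + L) → α)) (w : Fin m → α) : Finset (Fin L → α) :=
  univ.filter fun v => Fin.append w v ∈ A

lemma mem_slice {A : Finset (Fin (m + L) → α)} {w : Fin m → α} {v : Fin L → α} :
    v ∈ slice A w ↔ Fin.append w v ∈ A := by
  simp [slice]

lemma HasLine.of_slice {A : Finset (Fin (m + L) → α)} {w : Fin m → α}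
    (h : HasLine (slice A w)) : HasLine A := by
  obtain ⟨t, hwild, ht⟩ := h
  exact hasLine_of_append (t₁ := fun j => some (w j)) (Or.inr hwild) fun i => mem_slice.1 (ht i)

lemma sum_card_slice (A : Finset (Fin (m + L) → α)) : ∑ w, (slice A w).card = A.card := by
  calc ∑ w, (slice A w).card
      = ∑ p : (Fin m → α) × (Fin L → α), if Fin.appendEquiv m L p ∈ A then 1 else 0 := by
        simp only [slice, card_filter, Fintype.sum_prod_type]; rfl
    _ = ∑ x, if x ∈ A then 1 else 0 := Equiv.sum_comp _ (fun x => if x ∈ A then 1 else 0)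
    _ = A.card := by simp

end Slices

section Density

variable (α : Type*) [Fintype α]

open Classical in
noncomputable def maxLineFreeCard (N : ℕ) : ℕ :=
  ((univ : Finset (Finset (Fin N → α))).filter fun A => ¬HasLine A).sup card

noncomputable def lineFreeDensity (N : ℕ) : ℝ :=
  maxLineFreeCard α N / (Fintype.card α : ℝ) ^ N

variable {α}

lemma card_le_maxLineFreeCard {N : ℕ} {A : Finset (Fin N → α)} (hA : ¬HasLine A) :
    A.card ≤ maxLineFreeCard α N :=
  le_sup (f := card) (by simpa [maxLineFreeCard] using hA)

lemma exists_card_eq_maxLineFreeCard [Nonempty α] (N : ℕ) :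
    ∃ A : Finset (Fin N → α), ¬HasLine A ∧ A.card = maxLineFreeCard α N := by
  classical
  obtain ⟨A, hA, hcard⟩ := exists_mem_eq_sup
    ((univ : Finset (Finset (Fin N → α))).filter fun A => ¬HasLine A)
    ⟨∅, by simpa using not_hasLine_empty⟩ card
  exact ⟨A, by simpa using hA, by rw [maxLineFreeCard, hcard]⟩

lemma maxLineFreeCard_add_le [DecidableEq α] (m L : ℕ) :
    maxLineFreeCard α (m + L) ≤ Fintype.card α ^ m * maxLineFreeCard α L := by
  classical
  refine Finset.sup_le fun A hA => ?_
  have hfree : ¬HasLine A := by simpa using hA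
  calc A.card = ∑ w, (slice A w).card := (sum_card_slice A).symm
    _ ≤ ∑ _w : Fin m → α, maxLineFreeCard α L :=
      sum_le_sum fun w _ => card_le_maxLineFreeCard fun h => hfree h.of_slice
    _ = Fintype.card α ^ m * maxLineFreeCard α L := by simp

lemma lineFreeDensity_nonneg (N : ℕ) : 0 ≤ lineFreeDensity α N := by
  unfold lineFreeDensity
  positivity

lemma div_le_lineFreeDensity {N : ℕ} {A : Finset (Fin N → α)} (hA : ¬HasLine A) :
    A.card / (Fintype.card α : ℝ) ^ N ≤ lineFreeDensity α N := by
  unfold lineFreeDensity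
  gcongr
  exact_mod_cast card_le_maxLineFreeCard hA

lemma lineFreeDensity_antitone [Nonempty α] : Antitone (lineFreeDensity α) := by
  classical
  intro N N' hN
  obtain ⟨m, rfl⟩ : ∃ m, N' = m + N := ⟨N' - N, by omega⟩
  unfold lineFreeDensity
  rw [div_le_div_iff₀ (by positivity) (by positivity)]
  calc (maxLineFreeCard α (m + N) : ℝ) * Fintype.card α ^ N
      ≤ (Fintype.card α ^ m * maxLineFreeCard α N) * Fintype.card α ^ N := by
        gcongr
        exact_mod_cast maxLineFreeCard_add_le m N
    _ = maxLineFreeCard α N * Fintype.card α ^ (m + N) := by ring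

lemma le_iInf_lineFreeDensity_of_frequently [Nonempty α] {δ : ℝ}
    (h : ∃ᶠ N in atTop, δ ≤ lineFreeDensity α N) : δ ≤ ⨅ N, lineFreeDensity α N :=
  le_ciInf fun N =>
    let ⟨_, hN, hδ⟩ := frequently_atTop.1 h N
    hδ.trans (lineFreeDensity_antitone hN)

theorem exists_lineFree_forall_slice_dense [Nonempty α] [DecidableEq α]
    (hδ : 0 < ⨅ N, lineFreeDensity α N) (m : ℕ) :
    ∃ L, ∃ A : Finset (Fin (m + L) → α), ¬HasLine A ∧
      ∀ w, (⨅ N, lineFreeDensity α N) / 2 * Fintype.card α ^ L < (slice A w).card := by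
  set δ := ⨅ N, lineFreeDensity α N
  set c : ℝ := (Fintype.card α : ℝ)
  have hc : 0 < c := by positivity
  set ε := δ / (2 * c ^ m)
  have hε : 0 < ε := by positivity
  have hεc : ε * c ^ m = δ / 2 := by simp only [ε]; field_simp
  obtain ⟨L, hL⟩ : ∃ L, lineFreeDensity α L < δ + ε := exists_lt_of_ciInf_lt (by linarith)
  obtain ⟨A, hfree, hcard⟩ := exists_card_eq_maxLineFreeCard (α := α) (m + L)
  refine ⟨L, A, hfree, fun w => ?_⟩
  have hA : δ * c ^ (m + L) ≤ A.card := by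
    have := ciInf_le ⟨0, Set.forall_mem_range.2 (lineFreeDensity_nonneg (α := α))⟩ (m + L)
    rwa [lineFreeDensity, ← hcard, le_div_iff₀ (by positivity)] at this
  have hslice : ∀ w', ((slice A w').card : ℝ) ≤ (δ + ε) * c ^ L := fun w' =>
    calc ((slice A w').card : ℝ) ≤ maxLineFreeCard α L := by
          exact_mod_cast card_le_maxLineFreeCard fun h => hfree h.of_slice
      _ ≤ (δ + ε) * c ^ L := by
          rw [lineFreeDensity, div_lt_iff₀ (by positivity)] at hL
          exact hL.le
  have hsum := sum_le_apply_add_card_sub_one_mul hslice w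
  rw [← Nat.cast_sum, sum_card_slice] at hsum
  simp only [Fintype.card_fun, Fintype.card_fin, Nat.cast_pow] at hsum
  rw [pow_add] at hA
  -- `|slice A w| ≥ δ c^(m+L) - (c^m - 1)(δ + ε) c^L = (δ/2 + ε) c^L`
  nlinarith [mul_pos hε (pow_pos hc L)]

end Density

section Sampling

noncomputable def uniformSuffixes (k : ℕ) [NeZero k] (L : ℕ → ℕ) :
    Measure (∀ n, Fin (L n) → Fin k) :=
  Measure.infinitePi fun n => (PMF.uniformOfFintype (Fin (L n) → Fin k)).toMeasure

variable {k : ℕ} {L : ℕ → ℕ}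

instance [NeZero k] : IsProbabilityMeasure (uniformSuffixes k L) := by
  unfold uniformSuffixes
  infer_instance

def sliceIndicator (A : ∀ n, Finset (Fin (n + 1 + L n) → Fin k))
    (ω : ∀ n, Fin (L n) → Fin k) : DHJWord k → Bool :=
  fun w => decide (Fin.append w.2 (ω w.1) ∈ A w.1)

lemma measurable_sliceIndicator (A : ∀ n, Finset (Fin (n + 1 + L n) → Fin k)) :
    Measurable (sliceIndicator A) :=
  measurable_pi_lambda _ fun w => (Measurable.of_discrete (f := fun v : Fin (L w.1) → Fin k =>
    decide (Fin.append w.2 v ∈ A w.1))).comp (measurable_pi_apply w.1)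

variable [NeZero k]

lemma map_sliceIndicator_apply (A : ∀ n, Finset (Fin (n + 1 + L n) → Fin k)) (w : DHJWord k) :
    (uniformSuffixes k L).map (sliceIndicator A) {x | x w = true}
      = (slice (A w.1) w.2).card / (k ^ L w.1 : ℝ≥0∞) := by
  have hpre : sliceIndicator A ⁻¹' {x | x w = true}
      = (fun ω => ω w.1) ⁻¹' (slice (A w.1) w.2 : Set (Fin (L w.1) → Fin k)) := by
    ext ω
    simp [sliceIndicator, mem_slice]
  have hw : MeasurableSet {x : DHJWord k → Bool | x w = true} :=
    measurableSet_eq_fun (measurable_pi_apply w) measurable_const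
  rw [Measure.map_apply (measurable_sliceIndicator A) hw, hpre,
    ← Measure.map_apply (measurable_pi_apply w.1) (Set.toFinite _).measurableSet,
    uniformSuffixes, Measure.infinitePi_map_eval,
    PMF.toMeasure_uniformOfFintype_apply _ (Set.toFinite _).measurableSet]
  simp

lemma ofReal_le_map_sliceIndicator_apply {A : ∀ n, Finset (Fin (n + 1 + L n) → Fin k)}
    {δ : ℝ} {w : DHJWord k} (h : δ * k ^ L w.1 ≤ (slice (A w.1) w.2).card) :
    ENNReal.ofReal δ ≤ (uniformSuffixes k L).map (sliceIndicator A) {x | x w = true} := by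
  have hk : (0 : ℝ) < k ^ L w.1 := pow_pos (by exact_mod_cast Nat.pos_of_neZero k) _
  calc ENNReal.ofReal δ ≤ ENNReal.ofReal ((slice (A w.1) w.2).card / k ^ L w.1) :=
        ENNReal.ofReal_le_ofReal ((le_div_iff₀ hk).2 h)
    _ = _ := by
        rw [map_sliceIndicator_apply, ENNReal.ofReal_div_of_pos hk]
        norm_cast

lemma map_sliceIndicator_line_eq_zero {A : ∀ n, Finset (Fin (n + 1 + L n) → Fin k)}
    (hA : ∀ n, ¬HasLine (A n)) {n : ℕ} {t : Fin (n + 1) → Option (Fin k)}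
    (ht : ∃ j, t j = none) :
    (uniformSuffixes k L).map (sliceIndicator A)
      {x | ∀ i, x (DHJLineWord k n t i) = true} = 0 := by
  have hline : MeasurableSet {x : DHJWord k → Bool | ∀ i, x (DHJLineWord k n t i) = true} := by
    simp only [Set.ofPred_forall]
    exact .iInter fun i => measurableSet_eq_fun (measurable_pi_apply _) measurable_const
  rw [Measure.map_apply (measurable_sliceIndicator A) hline]
  convert measure_empty (μ := uniformSuffixes k L)
  refine Set.eq_empty_of_forall_notMem fun ω hω => hA n ?_
  exact hasLine_of_append (t₂ := fun j => some (ω n j)) (Or.inl ht) fun i =>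
    of_decide_eq_true (hω i)

end Sampling

end DHJ

open DHJ in
/-- The infinitary Density Hales–Jewett theorem implies the finitary one: if every
Borel probability measure on `{0,1}^{[k]^*}` whose every one-coordinate marginal
gives mass at least `δ` to `1` charges the event that some combinatorial line is
monochromatically `1`, then any sufficiently high-dimensional subset of `[k]^N` of
density at least `δ` contains a combinatorial line. -/
theorem finitary_DHJ_of_infinitary_DHJ (k : ℕ) (hk : 1 ≤ k)
    (hinf : ∀ δ : ℝ, 0 < δ → ∀ μ : Measure (DHJWord k → Bool), IsProbabilityMeasure μ →
      (∀ w : DHJWord k, ENNReal.ofReal δ ≤ μ {x | x w = true}) →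
      ∃ (n : ℕ) (t : Fin (n + 1) → Option (Fin k)), (∃ m, t m = none) ∧
        0 < μ {x | ∀ i : Fin k, x (DHJLineWord k n t i) = true}) :
    ∀ δ : ℝ, 0 < δ → ∃ N₀ : ℕ, ∀ N, N₀ ≤ N →
      ∀ A : Finset (Fin N → Fin k), δ * (k : ℝ) ^ N ≤ (A.card : ℝ) →
        ∃ t : Fin N → Option (Fin k), (∃ m, t m = none) ∧
          ∀ i : Fin k, (fun m => (t m).getD i) ∈ A := by
  have : NeZero k := ⟨by omega⟩
  intro δ hδ
  by_contra! hcon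
  have hfreq : ∃ᶠ N in atTop, δ ≤ lineFreeDensity (Fin k) N := by
    refine frequently_atTop.2 fun N₀ => ?_
    obtain ⟨N, hN, A, hdense, hfree⟩ := hcon N₀
    refine ⟨N, hN, le_trans ?_ (div_le_lineFreeDensity (A := A) fun ⟨t, hwild, ht⟩ => ?_)⟩
    · rw [le_div_iff₀ (by positivity)]
      simpa using hdense
    · obtain ⟨i, hi⟩ := hfree t hwild
      exact hi (ht i)
  have hδ₀ := hδ.trans_le (le_iInf_lineFreeDensity_of_frequently hfreq)
  choose L A hfree hdense using fun n => exists_lineFree_forall_slice_dense hδ₀ (n + 1)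
  obtain ⟨n, t, hwild, hpos⟩ :=
    hinf _ (half_pos hδ₀) ((uniformSuffixes k L).map (sliceIndicator A))
    (Measure.isProbabilityMeasure_map (measurable_sliceIndicator A).aemeasurable)
    fun w => ofReal_le_map_sliceIndicator_apply (by simpa using (hdense w.1 w.2).le)
  exact hpos.ne' (map_sliceIndicator_line_eq_zero hfree hwild)
end
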